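/- arXiv:1801.08090 — 3 statements merged into one kernel-verified Lean document; each statement's English description precedes it below -/
import Mathlib

section
/- Idempotency of channel operators: for any channel C₁ : X×Y₁ → ℝ and any p ∈ [0,1], (i) C₁ ∥ C₁ ⊑ C₁; (ii) C₁ ⊞_p C₁ ≡ C₁; and (iii) C₁ ⊕_p C₁ = C₁. -/
open Finset

/-- A channel with input set `X` and output set `Y`: entries are nonnegative
and each row sums to `1`. -/
def IsChannel {X Y : Type*} [Fintype Y] (C : X → Y → ℝ) : Prop :=
  (∀ x y, 0 ≤ C x y) ∧ ∀ x, ∑ y, C x y = 1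

/-- A channel with input set `X` whose output set is the finset `S` of a common
ambient type `Ω`: entries are nonnegative, each row sums to `1` over `S`, and
entries vanish outside `S`. -/
def IsChannelOn {X Ω : Type*} (S : Finset Ω) (C : X → Ω → ℝ) : Prop :=
  (∀ x y, 0 ≤ C x y) ∧ (∀ x, ∑ y ∈ S, C x y = 1) ∧ ∀ x y, y ∉ S → C x y = 0

/-- Parallel composition `C₁ ∥ C₂`. -/
def par {X Y₁ Y₂ : Type*} (C₁ : X → Y₁ → ℝ) (C₂ : X → Y₂ → ℝ) : X → Y₁ × Y₂ → ℝ :=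
  fun x y => C₁ x y.1 * C₂ x y.2

/-- Visible choice `C₁ ⊞_p C₂`, on the disjoint union of the output sets. -/
def vis {X Y₁ Y₂ : Type*} (p : ℝ) (C₁ : X → Y₁ → ℝ) (C₂ : X → Y₂ → ℝ) : X → Y₁ ⊕ Y₂ → ℝ :=
  fun x => Sum.elim (fun y => p * C₁ x y) (fun y => (1 - p) * C₂ x y)

/-- Hidden choice `C₁ ⊕_p C₂` for channels whose output sets lie in a common
ambient type (pointwise convex combination; this agrees with the case analysis
on `Y₁ ∩ Y₂`, `Y₁ \ Y₂`, `Y₂ \ Y₁` since channels vanish outside their output sets). -/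
def hid {X Ω : Type*} (p : ℝ) (C₁ C₂ : X → Ω → ℝ) : X → Ω → ℝ :=
  fun x y => p * C₁ x y + (1 - p) * C₂ x y

/-- Equality up to a permutation of the output set, `C₁ ≐ C₂`. -/
def PermEq {X Y₁ Y₂ : Type*} (C₁ : X → Y₁ → ℝ) (C₂ : X → Y₂ → ℝ) : Prop :=
  ∃ ψ : Y₁ ≃ Y₂, ∀ x y, C₁ x y = C₂ x (ψ y)

/-- Cascading `CD` of channels. -/
def cascade {X Y Z : Type*} [Fintype Y] (C : X → Y → ℝ) (D : Y → Z → ℝ) : X → Z → ℝ :=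
  fun x z => ∑ y, C x y * D y z

/-- `Refines C₁ C₂` (written `C₁ ⊑ C₂`): there is a channel `D` with `C₁D = C₂`. -/
def Refines {X Y₁ Y₂ : Type*} [Fintype Y₁] [Fintype Y₂] (C₁ : X → Y₁ → ℝ)
    (C₂ : X → Y₂ → ℝ) : Prop :=
  ∃ D : Y₁ → Y₂ → ℝ, IsChannel D ∧ cascade C₁ D = C₂

/-- Equivalence of channels: mutual refinement. -/
def EquivCh {X Y₁ Y₂ : Type*} [Fintype Y₁] [Fintype Y₂] (C₁ : X → Y₁ → ℝ)
    (C₂ : X → Y₂ → ℝ) : Prop :=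
  Refines C₁ C₂ ∧ Refines C₂ C₁

/-- A prior: a probability distribution on the finite input set `X`. -/
def IsPrior {X : Type*} [Fintype X] (π : X → ℝ) : Prop :=
  (∀ x, 0 ≤ π x) ∧ ∑ x, π x = 1

/-- A gain function `g : W × X → [0,1]`. -/
def IsGain {W X : Type*} (g : W → X → ℝ) : Prop :=
  ∀ w x, 0 ≤ g w x ∧ g w x ≤ 1

/-- Posterior g-vulnerability `V_g[π, C]`. -/
noncomputable def postV {W X Y : Type*} [Fintype W] [Nonempty W] [Fintype X] [Fintype Y]
    (π : X → ℝ) (g : W → X → ℝ) (C : X → Y → ℝ) : ℝ :=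
  ∑ y, univ.sup' univ_nonempty fun w => ∑ x, C x y * π x * g w x


/-!
The refinements `C ∥ C ⊑ C` and `C ⊞_p C ⊑ C` are witnessed by deterministic post-processing:
project a pair of outputs to its first component, resp. forget which branch of the visible
choice produced the output (which turns `C₁ ⊞_p C₂` into `C₁ ⊕_p C₂`). Conversely,
`C ⊑ C ⊞_p C` because the post-processing may flip the `p`-coin itself and tag the output.
-/

def detChannel {Y Z : Type*} [DecidableEq Z] (f : Y → Z) : Y → Z → ℝ :=
  fun y => Pi.single (f y) 1

section Channels

variable {X Y Z : Type*}

theorem isChannel_detChannel [Fintype Z] [DecidableEq Z] (f : Y → Z) :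
    IsChannel (detChannel f) :=
  ⟨fun y z => by simp only [detChannel, Pi.single_apply]; positivity,
    fun y => by simp [detChannel]⟩

theorem IsChannel.vis [Fintype Y] [Fintype Z] {p : ℝ} (hp : p ∈ Set.Icc (0 : ℝ) 1)
    {D₁ : X → Y → ℝ} {D₂ : X → Z → ℝ} (h₁ : IsChannel D₁) (h₂ : IsChannel D₂) :
    IsChannel (vis p D₁ D₂) := by
  obtain ⟨hp0, hp1⟩ := hp
  refine ⟨fun x y => ?_, fun x => ?_⟩
  · rcases y with y | y
    · exact mul_nonneg hp0 (h₁.1 x y)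
    · exact mul_nonneg (sub_nonneg.2 hp1) (h₂.1 x y)
  · simp only [_root_.vis, Fintype.sum_sum_type, Sum.elim_inl, Sum.elim_inr, ← mul_sum,
      h₁.2, h₂.2]
    ring

theorem cascade_detChannel_id [Fintype Y] [DecidableEq Y] (C : X → Y → ℝ) :
    cascade C (detChannel id) = C := by
  funext x z
  simp [cascade, detChannel, Pi.single_apply]

theorem cascade_vis {W : Type*} [Fintype Y] (p : ℝ) (C : X → Y → ℝ) (D₁ : Y → Z → ℝ)
    (D₂ : Y → W → ℝ) :
    cascade C (vis p D₁ D₂) = vis p (cascade C D₁) (cascade C D₂) := by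
  funext x z
  rcases z with z | z <;>
    simp only [cascade, _root_.vis, Sum.elim_inl, Sum.elim_inr, mul_sum] <;>
    exact sum_congr rfl fun _ _ => by ring

theorem refines_par_left [Fintype Y] [Fintype Z] (C₁ : X → Y → ℝ) {C₂ : X → Z → ℝ}
    (h₂ : IsChannel C₂) : Refines (par C₁ C₂) C₁ := by
  classical
  refine ⟨detChannel Prod.fst, isChannel_detChannel _, ?_⟩
  funext x z
  simp [cascade, detChannel, Pi.single_apply, par, Fintype.sum_prod_type, ← mul_sum, h₂.2]

theorem refines_vis_hid [Fintype Y] [DecidableEq Y] (p : ℝ) (C₁ C₂ : X → Y → ℝ) :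
    Refines (vis p C₁ C₂) (hid p C₁ C₂) := by
  refine ⟨detChannel (Sum.elim id id), isChannel_detChannel _, ?_⟩
  funext x z
  simp only [cascade, Fintype.sum_sum_type, detChannel, Sum.elim_inl, Sum.elim_inr, id]
  simp [vis, hid, Pi.single_apply]

theorem refines_vis_self [Fintype Y] {p : ℝ} (hp : p ∈ Set.Icc (0 : ℝ) 1) (C : X → Y → ℝ) :
    Refines C (vis p C C) := by
  classical
  refine ⟨vis p (detChannel id) (detChannel id),
    IsChannel.vis hp (isChannel_detChannel _) (isChannel_detChannel _), ?_⟩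
  rw [cascade_vis, cascade_detChannel_id]

theorem hid_self (p : ℝ) (C : X → Y → ℝ) : hid p C C = C := by
  funext x y
  simp only [hid]
  ring

end Channels

/-- Idempotency of the channel operators (Proposition: Idempotency). -/
theorem idempotency_of_operators {X Y₁ : Type*} [Fintype Y₁]
    (C₁ : X → Y₁ → ℝ) (h₁ : IsChannel C₁)
    (p : ℝ) (hp : p ∈ Set.Icc (0:ℝ) 1) :
    Refines (par C₁ C₁) C₁ ∧
    EquivCh (vis p C₁ C₁) C₁ ∧
    hid p C₁ C₁ = C₁ := by
  classical
  have hvis : Refines (vis p C₁ C₁) C₁ := by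
    simpa only [hid_self] using refines_vis_hid p C₁ C₁
  exact ⟨refines_par_left C₁ h₁, ⟨hvis, refines_vis_self hp C₁⟩, hid_self p C₁⟩
end

section
/- Ordering between operators: let C₁ : X×Y₁ → ℝ and C₂ : X×Y₂ → ℝ be compatible channels, π a prior on X, g a gain function, and p ∈ [0,1]. Then V_g[π, C₁ ∥ C₂] ≥ V_g[π, C₁ ⊞_p C₂] ≥ V_g[π, C₁ ⊕_p C₂]. -/
open Finset

/-!
Visible choice reveals which channel was used, so its vulnerability is exactly the convex
combination `p * V_g[π, C₁] + (1 - p) * V_g[π, C₂]`. Hidden choice merges the outputs of the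
two channels, and a maximum of a sum is at most the sum of the maxima. Finally each `Cᵢ` is a
marginal, hence a post-processing, of `C₁ ∥ C₂`, so by the data-processing inequality for
g-vulnerability `V_g[π, Cᵢ] ≤ V_g[π, C₁ ∥ C₂]`, and so is any convex combination of the two.
-/

lemma IsChannelOn.sum_eq_one {X Ω : Type*} [Fintype Ω] {S : Finset Ω} {C : X → Ω → ℝ}
    (h : IsChannelOn S C) (x : X) : ∑ y, C x y = 1 := by
  rw [← h.2.1 x]
  exact (sum_subset (subset_univ S) fun y _ hy => h.2.2 x y hy).symm

section Marginals

variable {X Y₁ Y₂ : Type*} [Fintype Y₁] [Fintype Y₂]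

lemma refines_par_left_s13 (C₁ : X → Y₁ → ℝ) {C₂ : X → Y₂ → ℝ} (hC₂ : ∀ x, ∑ y, C₂ x y = 1) :
    Refines (par C₁ C₂) C₁ := by
  classical
  refine ⟨fun y y₁ => if y.1 = y₁ then 1 else 0, ⟨fun _ _ => by positivity, fun _ => by simp⟩, ?_⟩
  funext x y₁
  simp [cascade, par, Fintype.sum_prod_type, ← mul_sum, hC₂]

lemma refines_par_right {C₁ : X → Y₁ → ℝ} (hC₁ : ∀ x, ∑ y, C₁ x y = 1) (C₂ : X → Y₂ → ℝ) :
    Refines (par C₁ C₂) C₂ := by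
  classical
  refine ⟨fun y y₂ => if y.2 = y₂ then 1 else 0, ⟨fun _ _ => by positivity, fun _ => by simp⟩, ?_⟩
  funext x y₂
  simp [cascade, par, Fintype.sum_prod_type_right, ← sum_mul, hC₁]

end Marginals

section Vulnerability

variable {W X : Type*} [Fintype W] [Nonempty W] [Fintype X] (π : X → ℝ) (g : W → X → ℝ)

lemma postV_const_mul {Y : Type*} [Fintype Y] (C : X → Y → ℝ) {c : ℝ} (hc : 0 ≤ c) :
    postV π g (fun x y => c * C x y) = c * postV π g C := by
  simp only [postV, mul_sum, mul₀_sup' hc, mul_assoc]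

lemma postV_sumElim {Y₁ Y₂ : Type*} [Fintype Y₁] [Fintype Y₂]
    (C₁ : X → Y₁ → ℝ) (C₂ : X → Y₂ → ℝ) :
    postV π g (fun x => Sum.elim (C₁ x) (C₂ x)) = postV π g C₁ + postV π g C₂ :=
  Fintype.sum_sum_type _

lemma postV_add_le {Y : Type*} [Fintype Y] (C D : X → Y → ℝ) :
    postV π g (C + D) ≤ postV π g C + postV π g D := by
  rw [postV, postV, postV, ← sum_add_distrib]
  refine sum_le_sum fun y _ => sup'_le _ _ fun w _ => ?_
  simp only [Pi.add_apply, add_mul, sum_add_distrib]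
  exact add_le_add (le_sup' (fun w => ∑ x, C x y * π x * g w x) (mem_univ w))
    (le_sup' (fun w => ∑ x, D x y * π x * g w x) (mem_univ w))

theorem postV_le_of_refines {Y Z : Type*} [Fintype Y] [Fintype Z]
    {C : X → Y → ℝ} {E : X → Z → ℝ} (h : Refines C E) : postV π g E ≤ postV π g C := by
  obtain ⟨D, ⟨hD_nonneg, hD_sum⟩, rfl⟩ := h
  calc postV π g (cascade C D)
      = ∑ z, univ.sup' univ_nonempty fun w => ∑ y, D y z * ∑ x, C x y * π x * g w x := by
        simp only [postV, cascade, mul_sum, sum_mul]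
        refine sum_congr rfl fun z _ => ?_
        congr 1
        funext w
        rw [sum_comm]
        exact sum_congr rfl fun y _ => sum_congr rfl fun x _ => by ring
    _ ≤ ∑ z, ∑ y, D y z * univ.sup' univ_nonempty fun w => ∑ x, C x y * π x * g w x :=
        sum_le_sum fun z _ => sup'_le _ _ fun w _ => sum_le_sum fun y _ =>
          mul_le_mul_of_nonneg_left (le_sup' (fun w => ∑ x, C x y * π x * g w x) (mem_univ w))
            (hD_nonneg y z)
    _ = postV π g C := by
        rw [sum_comm]
        simp only [← sum_mul, hD_sum, one_mul]
        rfl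

variable {p : ℝ} (hp0 : 0 ≤ p) (hp1 : p ≤ 1)
include hp0 hp1

lemma postV_vis {Y₁ Y₂ : Type*} [Fintype Y₁] [Fintype Y₂]
    (C₁ : X → Y₁ → ℝ) (C₂ : X → Y₂ → ℝ) :
    postV π g (vis p C₁ C₂) = p * postV π g C₁ + (1 - p) * postV π g C₂ := by
  rw [← postV_const_mul π g C₁ hp0, ← postV_const_mul π g C₂ (sub_nonneg.2 hp1)]
  exact postV_sumElim π g _ _

lemma postV_hid_le {Y : Type*} [Fintype Y] (C₁ C₂ : X → Y → ℝ) :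
    postV π g (hid p C₁ C₂) ≤ p * postV π g C₁ + (1 - p) * postV π g C₂ := by
  rw [← postV_const_mul π g C₁ hp0, ← postV_const_mul π g C₂ (sub_nonneg.2 hp1)]
  exact postV_add_le π g _ _

end Vulnerability

theorem ordering_between_operators_general {W X Ω : Type*}
    [Fintype W] [Nonempty W] [Fintype X] [Fintype Ω]
    (Y₁ Y₂ : Finset Ω) (C₁ C₂ : X → Ω → ℝ)
    (h₁ : IsChannelOn Y₁ C₁) (h₂ : IsChannelOn Y₂ C₂)
    (π : X → ℝ) (g : W → X → ℝ)
    (p : ℝ) (hp : p ∈ Set.Icc (0:ℝ) 1) :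
    postV π g (hid p C₁ C₂) ≤ postV π g (vis p C₁ C₂) ∧
    postV π g (vis p C₁ C₂) ≤ postV π g (par C₁ C₂) := by
  obtain ⟨hp0, hp1⟩ := hp
  have hvis := postV_vis π g hp0 hp1 C₁ C₂
  refine ⟨hvis ▸ postV_hid_le π g hp0 hp1 C₁ C₂, ?_⟩
  have hle₁ := postV_le_of_refines π g (refines_par_left_s13 C₁ h₂.sum_eq_one)
  have hle₂ := postV_le_of_refines π g (refines_par_right h₁.sum_eq_one C₂)
  rw [hvis]
  linarith [mul_le_mul_of_nonneg_left hle₁ hp0, mul_le_mul_of_nonneg_left hle₂ (sub_nonneg.2 hp1)]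

/-- Ordering between the operators (Corollary: Ordering between operators). -/
theorem ordering_between_operators {W X Ω : Type*}
    [Fintype W] [Nonempty W] [Fintype X] [Fintype Ω]
    (Y₁ Y₂ : Finset Ω) (C₁ C₂ : X → Ω → ℝ)
    (h₁ : IsChannelOn Y₁ C₁) (h₂ : IsChannelOn Y₂ C₂)
    (π : X → ℝ) (hπ : IsPrior π) (g : W → X → ℝ) (hg : IsGain g)
    (p : ℝ) (hp : p ∈ Set.Icc (0:ℝ) 1) :
    postV π g (hid p C₁ C₂) ≤ postV π g (vis p C₁ C₂) ∧
    postV π g (vis p C₁ C₂) ≤ postV π g (par C₁ C₂) :=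
  ordering_between_operators_general Y₁ Y₂ C₁ C₂ h₁ h₂ π g p hp
end

section
/- Relative monotonicity for parallel composition: let C₁ : X×Y₁ → ℝ and C₂ : X×Y₂ → ℝ be compatible channels. (a) For any fixed gain function g: ( for all priors π' on X, V_g[π',C₁] ≤ V_g[π',C₂] ) if and only if ( for all priors π' on X and all channels C compatible with C₁ and C₂, V_g[π', C₁ ∥ C] ≤ V_g[π', C₂ ∥ C] ). (b) For any fixed prior π on X: ( for all gain functions g', V_{g'}[π,C₁] ≤ V_{g'}[π,C₂] ) if and only if ( for all gain functions g' and all channels C compatible with C₁ and C₂, V_{g'}[π, C₁ ∥ C] ≤ V_{g'}[π, C₂ ∥ C] ). -/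
open Finset

/-!
Both equivalences are proved by the same two observations about
`V_g[π, D ∥ C]`. Grouping the outputs by the output `z` of `C` gives
`V_g[π, D ∥ C] = ∑ z, V_g[C(·,z)·π, D]`, and `V_g[·, D]` is positively homogeneous,
so an inequality between `C₁` and `C₂` holding for all priors holds for every
nonnegative weight vector and hence survives composition with `C`. Grouping instead
by the output of `D`, an adversary who sees `z` and then acts is an adversary
choosing a strategy `f : Z → W` in advance, so `V_g[π, D ∥ C] = V_{g_C}[π, D]` for
the gain function `g_C(f, x) = ∑ z, C(x,z) g(f z, x)`; hence an inequality holding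
for all gain functions also survives composition with `C`. The converse
directions compose with the channel that has a single output.
-/

theorem Finset.sum_sup'_eq_sup'_sum {Z W β : Type*} [Fintype Z] [DecidableEq Z]
    [Fintype W] [Nonempty W] [AddCommMonoid β] [LinearOrder β] [IsOrderedAddMonoid β]
    (F : Z → W → β) :
    ∑ z, univ.sup' univ_nonempty (F z)
      = univ.sup' univ_nonempty fun f : Z → W => ∑ z, F z (f z) := by
  apply le_antisymm
  · choose f _ hf using fun z => exists_mem_eq_sup' univ_nonempty (F z)
    calc ∑ z, univ.sup' univ_nonempty (F z) = ∑ z, F z (f z) := sum_congr rfl fun z _ => hf z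
      _ ≤ _ := le_sup' (fun f : Z → W => ∑ z, F z (f z)) (mem_univ f)
  · exact sup'_le _ _ fun f _ => sum_le_sum fun z _ => le_sup' (F z) (mem_univ (f z))

theorem isChannel_const_one {X : Type*} : IsChannel fun (_ : X) (_ : Unit) => (1 : ℝ) :=
  ⟨fun _ _ => zero_le_one, fun _ => by simp⟩

def parGain {W X Z : Type*} [Fintype Z] (C : X → Z → ℝ) (g : W → X → ℝ) :
    (Z → W) → X → ℝ :=
  fun f x => ∑ z, C x z * g (f z) x

theorem IsGain.parGain {W X Z : Type*} [Fintype Z] {C : X → Z → ℝ} {g : W → X → ℝ}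
    (hg : IsGain g) (hC : IsChannel C) : IsGain (parGain C g) := by
  intro f x
  refine ⟨sum_nonneg fun z _ => mul_nonneg (hC.1 x z) (hg (f z) x).1, ?_⟩
  calc ∑ z, C x z * g (f z) x ≤ ∑ z, C x z := sum_le_sum fun z _ =>
        mul_le_of_le_one_right (hC.1 x z) (hg (f z) x).2
    _ = 1 := hC.2 x

section PostV

variable {W X Y Z : Type*} [Fintype W] [Nonempty W] [Fintype X] [Fintype Y] [Fintype Z]

theorem postV_smul {c : ℝ} (hc : 0 ≤ c) (π : X → ℝ) (g : W → X → ℝ) (C : X → Y → ℝ) :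
    postV (c • π) g C = c * postV π g C := by
  simp only [postV, mul_sum, mul₀_sup' hc, Pi.smul_apply, smul_eq_mul]
  refine sum_congr rfl fun y _ => congrArg _ <| funext fun w => sum_congr rfl fun x _ => ?_
  ring

theorem postV_le_postV_of_nonneg {g : W → X → ℝ} {C₁ : X → Y → ℝ} {C₂ : X → Z → ℝ}
    (h : ∀ π, IsPrior π → postV π g C₁ ≤ postV π g C₂) {σ : X → ℝ} (hσ : ∀ x, 0 ≤ σ x) :
    postV σ g C₁ ≤ postV σ g C₂ := by
  set c := ∑ x, σ x
  rcases (sum_nonneg fun x _ => hσ x : 0 ≤ c).eq_or_lt with hc | hc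
  · have hσ0 : σ = (0 : ℝ) • σ := by
      ext x
      simpa using (sum_eq_zero_iff_of_nonneg fun x _ => hσ x).1 hc.symm x (mem_univ x)
    rw [hσ0, postV_smul le_rfl, postV_smul le_rfl, zero_mul, zero_mul]
  · have hprior : IsPrior (c⁻¹ • σ) :=
      ⟨fun x => mul_nonneg (inv_nonneg.2 hc.le) (hσ x), by
        simp only [Pi.smul_apply, smul_eq_mul, ← mul_sum, inv_mul_cancel₀ hc.ne', c]⟩
    rw [← smul_inv_smul₀ hc.ne' σ, postV_smul hc.le, postV_smul hc.le]
    exact mul_le_mul_of_nonneg_left (h _ hprior) hc.le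

theorem postV_par (π : X → ℝ) (g : W → X → ℝ) (D : X → Y → ℝ) (C : X → Z → ℝ) :
    postV π g (par D C) = ∑ z, postV (fun x => C x z * π x) g D := by
  simp only [postV, par, Fintype.sum_prod_type_right]
  congr! 5 with z _ y _ w _ x
  ring

theorem postV_par_const_one (π : X → ℝ) (g : W → X → ℝ) (D : X → Y → ℝ) :
    postV π g (par D fun _ (_ : Unit) => 1) = postV π g D := by
  simp [postV_par]

theorem postV_par_eq_postV_parGain [DecidableEq Z] (π : X → ℝ) (g : W → X → ℝ)
    (D : X → Y → ℝ) (C : X → Z → ℝ) :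
    postV π g (par D C) = postV π (parGain C g) D := by
  simp only [postV, par, parGain, Fintype.sum_prod_type]
  congr! 1 with y _
  rw [sum_sup'_eq_sup'_sum]
  congr! 2 with f _
  rw [sum_comm]
  simp only [mul_sum]
  congr! 2 with x _ z _
  ring

end PostV

theorem relative_monotonicity_parallel_general {X Y₁ Y₂ : Type*}
    [Fintype X] [Fintype Y₁] [Fintype Y₂]
    (C₁ : X → Y₁ → ℝ) (C₂ : X → Y₂ → ℝ) :
    (∀ (W : Type) [Fintype W] [Nonempty W] (g : W → X → ℝ), IsGain g →
      ((∀ π' : X → ℝ, IsPrior π' → postV π' g C₁ ≤ postV π' g C₂) ↔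
        (∀ π' : X → ℝ, IsPrior π' →
          ∀ (Z : Type) [Fintype Z] (C : X → Z → ℝ), IsChannel C →
            postV π' g (par C₁ C) ≤ postV π' g (par C₂ C)))) ∧
    (∀ π : X → ℝ, IsPrior π →
      ((∀ (W' : Type) [Fintype W'] [Nonempty W'] (g' : W' → X → ℝ), IsGain g' →
          postV π g' C₁ ≤ postV π g' C₂) ↔
        (∀ (W' : Type) [Fintype W'] [Nonempty W'] (g' : W' → X → ℝ), IsGain g' →
          ∀ (Z : Type) [Fintype Z] (C : X → Z → ℝ), IsChannel C →
            postV π g' (par C₁ C) ≤ postV π g' (par C₂ C)))) := by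
  refine ⟨fun W _ _ g _ => ⟨fun h π hπ Z _ C hC => ?_, fun h π hπ => ?_⟩,
    fun π hπ => ⟨fun h W _ _ g hg Z _ C hC => ?_, fun h W _ _ g hg => ?_⟩⟩
  · rw [postV_par, postV_par]
    exact sum_le_sum fun z _ =>
      postV_le_postV_of_nonneg h fun x => mul_nonneg (hC.1 x z) (hπ.1 x)
  · simpa only [postV_par_const_one] using h π hπ Unit _ isChannel_const_one
  · classical
    rw [postV_par_eq_postV_parGain, postV_par_eq_postV_parGain]
    exact h _ _ (hg.parGain hC)
  · simpa only [postV_par_const_one] using h W g hg Unit _ isChannel_const_one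

/-- Relative monotonicity for parallel composition. -/
theorem relative_monotonicity_parallel {X Y₁ Y₂ : Type*}
    [Fintype X] [Fintype Y₁] [Fintype Y₂]
    (C₁ : X → Y₁ → ℝ) (C₂ : X → Y₂ → ℝ)
    (h₁ : IsChannel C₁) (h₂ : IsChannel C₂) :
    (∀ (W : Type) [Fintype W] [Nonempty W] (g : W → X → ℝ), IsGain g →
      ((∀ π' : X → ℝ, IsPrior π' → postV π' g C₁ ≤ postV π' g C₂) ↔
        (∀ π' : X → ℝ, IsPrior π' →
          ∀ (Z : Type) [Fintype Z] (C : X → Z → ℝ), IsChannel C →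
            postV π' g (par C₁ C) ≤ postV π' g (par C₂ C)))) ∧
    (∀ π : X → ℝ, IsPrior π →
      ((∀ (W' : Type) [Fintype W'] [Nonempty W'] (g' : W' → X → ℝ), IsGain g' →
          postV π g' C₁ ≤ postV π g' C₂) ↔
        (∀ (W' : Type) [Fintype W'] [Nonempty W'] (g' : W' → X → ℝ), IsGain g' →
          ∀ (Z : Type) [Fintype Z] (C : X → Z → ℝ), IsChannel C →
            postV π g' (par C₁ C) ≤ postV π g' (par C₂ C)))) :=
  relative_monotonicity_parallel_general C₁ C₂
end
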